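/- Let Γ be a finitely generated group acting on A^Γ by left translations L_γ(x)(δ) = x(δγ), where A = {0,1}^ℕ × (ℕ ∪ {∞}). If y ∈ A^Γ is such that the Cantor coordinates γ ↦ C(y(γ)) form a proper Cantor labeling of Γ, then the action of Γ on the orbit closure of y is free. -/

import Mathlib

/-!
If `L_γ x = x` with `γ ≠ 1`, then `x(γ) = x(1)`. Put `r = d(1, γ) > 0`. The word metric is right
invariant, so `d(η, γη) = r` for every `η`, and properness makes the Cantor labels of `L_η y` at `1`
and at `γ` differ among the first `S_r` coordinates. Differing on finitely many coordinates is a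
closed condition, so it passes to the orbit closure, contradicting `x(γ) = x(1)`.
-/

/-- Word metric of the (right) Cayley graph `Cay(Γ, S)`. -/
noncomputable def wordDist {Γ : Type*} [Group Γ] (S : Set Γ) (γ δ : Γ) : ℕ :=
  sInf {n | ∃ l : List Γ, (∀ s ∈ l, s ∈ S) ∧ l.length = n ∧ l.prod * γ = δ}

/-- A proper Cantor labeling. -/
def IsProperCantorLabeling {Γ : Type*} [Group Γ] (d : Γ → Γ → ℕ) (lab : Γ → ℕ → Bool) : Prop :=
  ∀ r : ℕ, 0 < r → ∃ Sr : ℕ, 0 < Sr ∧ ∀ γ δ : Γ, 0 < d γ δ → d γ δ ≤ r →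
    ∃ i < Sr, lab γ i ≠ lab δ i

/-- `A = {0,1}^ℕ × (ℕ ∪ {∞})`, with `ℕ ∪ {∞}` the one-point compactification of `ℕ`. -/
abbrev CantorHeightSpace : Type := (ℕ → Bool) × OnePoint ℕ

/-- The left translation action on the Bernoulli space `A^Γ`: `L_γ(x)(δ) = x(δγ)`. -/
def Lact {Γ : Type*} [Group Γ] (γ : Γ) (x : Γ → CantorHeightSpace) : Γ → CantorHeightSpace :=
  fun δ => x (δ * γ)

/-- The orbit closure of `y` in the product topology on `A^Γ`. -/
def orbitClosure {Γ : Type*} [Group Γ] (y : Γ → CantorHeightSpace) :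
    Set (Γ → CantorHeightSpace) :=
  closure {x | ∃ γ : Γ, x = Lact γ y}

section WordDist

variable {Γ : Type*} [Group Γ] (S : Set Γ)

lemma wordDist_mul_right (γ δ η : Γ) :
    wordDist S (γ * η) (δ * η) = wordDist S γ δ := by
  unfold wordDist
  congr 1
  ext n
  simp only [Set.mem_ofPred_eq, ← mul_assoc, mul_left_inj]

lemma exists_word_mul_eq (hSsym : ∀ s ∈ S, s⁻¹ ∈ S) (hSgen : Subgroup.closure S = ⊤)
    (γ δ : Γ) : ∃ l : List Γ, (∀ s ∈ l, s ∈ S) ∧ l.prod * γ = δ := by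
  have hmem : δ * γ⁻¹ ∈ Submonoid.closure (S ∪ S⁻¹) := by
    rw [← Subgroup.closure_toSubmonoid, hSgen]
    trivial
  obtain ⟨l, hl, hprod⟩ := Submonoid.exists_list_of_mem_closure hmem
  refine ⟨l, fun s hs => ?_, by rw [hprod, inv_mul_cancel_right]⟩
  rcases hl s hs with h | h
  · exact h
  · simpa using hSsym _ (Set.mem_inv.mp h)

lemma wordDist_pos (hSsym : ∀ s ∈ S, s⁻¹ ∈ S) (hSgen : Subgroup.closure S = ⊤)
    {γ δ : Γ} (hne : γ ≠ δ) : 0 < wordDist S γ δ := by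
  obtain ⟨l, hlS, hl⟩ := exists_word_mul_eq S hSsym hSgen γ δ
  refine Nat.pos_of_ne_zero fun h0 => hne ?_
  have hmem : wordDist S γ δ ∈
      {n | ∃ l : List Γ, (∀ s ∈ l, s ∈ S) ∧ l.length = n ∧ l.prod * γ = δ} :=
    Nat.sInf_mem ⟨l.length, l, hlS, rfl, hl⟩
  rw [h0] at hmem
  obtain ⟨l', -, hlen, hprod⟩ := hmem
  simpa [List.length_eq_zero_iff.mp hlen] using hprod

end WordDist

lemma isClosed_setOf_exists_cantor_ne {Γ X : Type*} [TopologicalSpace X] (a b : Γ) (n : ℕ) :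
    IsClosed {z : Γ → (ℕ → Bool) × X | ∃ i < n, (z a).1 i ≠ (z b).1 i} := by
  have hunion : {z : Γ → (ℕ → Bool) × X | ∃ i < n, (z a).1 i ≠ (z b).1 i} =
      ⋃ i ∈ {i | i < n}, {z | (z a).1 i ≠ (z b).1 i} := by
    ext; simp
  rw [hunion]
  refine (Set.finite_lt_nat n).isClosed_biUnion fun i _ => ?_
  have hcont : Continuous fun z : Γ → (ℕ → Bool) × X => ((z a).1 i, (z b).1 i) := by fun_prop
  exact (isClosed_discrete {p : Bool × Bool | p.1 ≠ p.2}).preimage hcont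

theorem stmt2_general {Γ : Type*} [Group Γ] (S : Set Γ)
    (hSsym : ∀ s ∈ S, s⁻¹ ∈ S) (hSgen : Subgroup.closure S = ⊤)
    (y : Γ → CantorHeightSpace)
    (hproper : IsProperCantorLabeling (wordDist S) (fun γ => (y γ).1)) :
    ∀ x ∈ orbitClosure y, ∀ γ : Γ, γ ≠ 1 → Lact γ x ≠ x := by
  intro x hx γ hγ hfix
  have hr : 0 < wordDist S 1 γ := wordDist_pos S hSsym hSgen hγ.symm
  obtain ⟨n, -, hsep⟩ := hproper _ hr
  have horbit : {z | ∃ η : Γ, z = Lact η y} ⊆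
      {z | ∃ i < n, (z 1).1 i ≠ (z γ).1 i} := by
    rintro _ ⟨η, rfl⟩
    have hdist : wordDist S η (γ * η) = wordDist S 1 γ := by
      simpa using wordDist_mul_right S 1 γ η
    simpa [Lact] using hsep η (γ * η) (hdist ▸ hr) hdist.le
  obtain ⟨i, -, hi⟩ := closure_minimal horbit (isClosed_setOf_exists_cantor_ne 1 γ n) hx
  have hfix1 : x γ = x 1 := by simpa [Lact] using congrFun hfix 1
  exact hi (by rw [hfix1])

/-- if the Cantor coordinates of `y ∈ A^Γ` form a proper Cantor labeling of `Γ`,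
then the translation action of `Γ` on the orbit closure of `y` is free. -/
theorem stmt2 {Γ : Type*} [Group Γ] (S : Set Γ)
    (hSfin : S.Finite) (hSsym : ∀ s ∈ S, s⁻¹ ∈ S) (hSgen : Subgroup.closure S = ⊤)
    (y : Γ → CantorHeightSpace)
    (hproper : IsProperCantorLabeling (wordDist S) (fun γ => (y γ).1)) :
    ∀ x ∈ orbitClosure y, ∀ γ : Γ, γ ≠ 1 → Lact γ x ≠ x :=
  stmt2_general S hSsym hSgen y hproper
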